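/- arXiv:2506.15416 — 2 statements merged into one kernel-verified Lean document; each statement's English description precedes it below -/
import Mathlib

section
/- If a, b, c are positive reals, cosh a = cosh b * cosh c, and we set λ_a = (cosh b + cosh c)/(1 + cosh a), λ_b = (cosh c + cosh a)/(1 + cosh b), λ_c = (cosh a + cosh b)/(1 + cosh c), then λ_a * sinh(a)^2 = λ_b * sinh(b)^2 + λ_c * sinh(c)^2. -/
/-! Since `sinh x ^ 2 = (cosh x - 1) * (1 + cosh x)`, each weight cancels its denominator:
`λ_a sinh² a = (cosh b + cosh c) (cosh a - 1)`, and similarly for `b` and `c`. The identity then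
reduces to `2 (cosh a - cosh b cosh c) = 0`. -/

open Real

theorem Real.div_one_add_cosh_mul_sinh_sq (u x : ℝ) :
    u / (1 + cosh x) * sinh x ^ 2 = u * (cosh x - 1) := by
  have hpos : 0 < 1 + cosh x := by positivity
  rw [sinh_sq]
  field_simp
  ring

theorem hyperbolic_three_square_identity_general
    (a b c : ℝ)
    (h : cosh a = cosh b * cosh c) :
    ((cosh b + cosh c) / (1 + cosh a)) * sinh a ^ 2 =
      ((cosh c + cosh a) / (1 + cosh b)) * sinh b ^ 2 +
      ((cosh a + cosh b) / (1 + cosh c)) * sinh c ^ 2 := by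
  simp only [div_one_add_cosh_mul_sinh_sq]
  linear_combination 2 * h

theorem hyperbolic_three_square_identity
    (a b c : ℝ) (ha : 0 < a) (hb : 0 < b) (hc : 0 < c)
    (h : cosh a = cosh b * cosh c) :
    ((cosh b + cosh c) / (1 + cosh a)) * sinh a ^ 2 =
      ((cosh c + cosh a) / (1 + cosh b)) * sinh b ^ 2 +
      ((cosh a + cosh b) / (1 + cosh c)) * sinh c ^ 2 :=
  hyperbolic_three_square_identity_general a b c h
end

section
/- If a, b, c lie in (0, π), cos a = cos b * cos c, and we set λ_a = (cos b + cos c)/(1 + cos a), λ_b = (cos c + cos a)/(1 + cos b), λ_c = (cos a + cos b)/(1 + cos c), then λ_a * sin(a)^2 = λ_b * sin(b)^2 + λ_c * sin(c)^2. -/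
/-! Because `sin x ^ 2 = (1 + cos x) * (1 - cos x)`, each term `λ_a * sin a ^ 2` equals
`(cos b + cos c) * (1 - cos a)`, and the two sides of the identity then differ by
`2 * (cos b * cos c - cos a)`. -/

open Real

lemma one_add_cos_pos {x : ℝ} (hx : x ∈ Set.Ico 0 π) : 0 < 1 + cos x := by
  have := cos_lt_cos_of_nonneg_of_le_pi hx.1 le_rfl hx.2
  rw [cos_pi] at this
  linarith

lemma div_one_add_cos_mul_sin_sq (u : ℝ) {x : ℝ} (hx : 1 + cos x ≠ 0) :
    u / (1 + cos x) * sin x ^ 2 = u * (1 - cos x) := by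
  rw [sin_sq, show 1 - cos x ^ 2 = (1 + cos x) * (1 - cos x) by ring]
  field_simp

theorem spherical_three_square_identity
    (a b c : ℝ) (ha : a ∈ Set.Ioo 0 π) (hb : b ∈ Set.Ioo 0 π) (hc : c ∈ Set.Ioo 0 π)
    (h : cos a = cos b * cos c) :
    ((cos b + cos c) / (1 + cos a)) * sin a ^ 2 =
      ((cos c + cos a) / (1 + cos b)) * sin b ^ 2 +
      ((cos a + cos b) / (1 + cos c)) * sin c ^ 2 := by
  rw [div_one_add_cos_mul_sin_sq _ (one_add_cos_pos (Set.Ioo_subset_Ico_self ha)).ne',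
    div_one_add_cos_mul_sin_sq _ (one_add_cos_pos (Set.Ioo_subset_Ico_self hb)).ne',
    div_one_add_cos_mul_sin_sq _ (one_add_cos_pos (Set.Ioo_subset_Ico_self hc)).ne']
  linear_combination (-2) * h
end
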